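/- arXiv:1107.0896 — 3 statements merged into one kernel-verified Lean document; each statement's English description precedes it below -/
import Mathlib

section
/- Let c > c₀ > 0, set cot α = √((c/c₀)² - 1) with sin α = c₀/c. If φ : ℝ^n → ℝ is a C² concave function solving -Δφ = (c₀ sin α / 2)(cot²α - |Dφ|²) and satisfying |Dφ(x)| ≤ cot α for all x, then φ is a (classical) subsolution of the forced mean curvature equation: -div( Dφ/√(1+|Dφ|²) ) + c₀ - c/√(1+|Dφ|²) ≤ 0 on ℝ^n. -/
/-!
Concavity makes the Hessian term `D²φ(Dφ, Dφ)` nonpositive, so it can only help. What remains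
is a pointwise inequality in `s = √(1 + |Dφ|²)`: after substituting the PDE for `Δφ`, the left
side becomes `-(c - c₀ s)² / (2 c s) ≤ 0`.
-/

open scoped RealInnerProductSpace

theorem ConcaveOn.fderiv_fderiv_apply_self_nonpos {E : Type*} [NormedAddCommGroup E]
    [NormedSpace ℝ E] {φ : E → ℝ} (hconc : ConcaveOn ℝ Set.univ φ) (hφ : Differentiable ℝ φ)
    {x : E} (hφ' : DifferentiableAt ℝ (fderiv ℝ φ) x) (v : E) :
    fderiv ℝ (fderiv ℝ φ) x v v ≤ 0 := by
  have hline : ∀ t : ℝ, HasDerivAt (fun t : ℝ => x + t • v) v t := fun t => by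
    simpa using ((hasDerivAt_id t).smul_const v).const_add x
  have hderiv : deriv (fun t : ℝ => φ (x + t • v)) = fun t => fderiv ℝ φ (x + t • v) v :=
    funext fun t => ((hφ _).hasFDerivAt.comp_hasDerivAt t (hline t)).deriv
  have hconcLine : ConcaveOn ℝ Set.univ (fun t : ℝ => φ (x + t • v)) := by
    simpa [Function.comp_def, AffineMap.lineMap_apply, add_comm]
      using hconc.comp_affineMap (AffineMap.lineMap x (x + v))
  have hanti : Antitone (fun t : ℝ => fderiv ℝ φ (x + t • v) v) := by
    rw [← hderiv]
    exact antitoneOn_univ.mp <| hconcLine.antitoneOn_deriv fun t _ =>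
      ((hφ _).hasFDerivAt.comp_hasDerivAt t (hline t)).differentiableAt
  have hsecond : HasDerivAt (fun t : ℝ => fderiv ℝ φ (x + t • v) v)
      (fderiv ℝ (fderiv ℝ φ) x v v) 0 := by
    have := hφ'.hasFDerivAt.comp_hasDerivAt_of_eq (0 : ℝ) (hline 0) (by simp)
    simpa using this.clm_apply (hasDerivAt_const (0 : ℝ) v)
  exact hsecond.deriv ▸ hanti.deriv_nonpos

theorem inner_fderiv_gradient_apply {F : Type*} [NormedAddCommGroup F] [InnerProductSpace ℝ F]
    [CompleteSpace F] {φ : F → ℝ} {x : F} (hφ : DifferentiableAt ℝ (fderiv ℝ φ) x) (v w : F) :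
    ⟪fderiv ℝ (gradient φ) x v, w⟫ = fderiv ℝ (fderiv ℝ φ) x v w := by
  have : HasFDerivAt (gradient φ)
      ((InnerProductSpace.toDual ℝ F).symm.toContinuousLinearEquiv.toContinuousLinearMap.comp
        (fderiv ℝ (fderiv ℝ φ) x)) x :=
    (InnerProductSpace.toDual ℝ F).symm.toContinuousLinearEquiv.hasFDerivAt.comp x hφ.hasFDerivAt
  simp [this.fderiv, InnerProductSpace.toDual_symm_apply]

theorem forcing_sub_div_sqrt_one_add_sq_nonpos {c c₀ g : ℝ} (hc₀ : c₀ ≠ 0) (hc : 0 < c) :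
    c₀ * (c₀ / c) / 2 * ((c / c₀) ^ 2 - 1 - g ^ 2) / √(1 + g ^ 2) + c₀ - c / √(1 + g ^ 2)
      ≤ 0 := by
  have hs : 0 < √(1 + g ^ 2) := by positivity
  have hs2 : √(1 + g ^ 2) ^ 2 = 1 + g ^ 2 := Real.sq_sqrt (by positivity)
  have hsquare : c₀ * (c₀ / c) / 2 * ((c / c₀) ^ 2 - 1 - g ^ 2) / √(1 + g ^ 2) + c₀ - c / √(1 + g ^ 2)
      = -(c - c₀ * √(1 + g ^ 2)) ^ 2 / (2 * c * √(1 + g ^ 2)) := by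
    field_simp
    linear_combination c₀ ^ 2 * hs2
  rw [hsquare]
  exact div_nonpos_of_nonpos_of_nonneg (neg_nonpos.2 (sq_nonneg _)) (by positivity)

theorem stmt_7_general {n : ℕ} (c c₀ cot : ℝ) (hc₀ : 0 < c₀) (hc : c₀ < c)
    (hcot : cot = Real.sqrt ((c / c₀) ^ 2 - 1))
    (φ : EuclideanSpace ℝ (Fin n) → ℝ)
    (hφ : ContDiff ℝ 2 φ)
    (hconc : ConcaveOn ℝ Set.univ φ)
    (hpde : ∀ x, -(∑ i : Fin n,
        fderiv ℝ (fun y => fderiv ℝ φ y (EuclideanSpace.single i (1 : ℝ))) x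
          (EuclideanSpace.single i (1 : ℝ)))
      = (c₀ * (c₀ / c) / 2) * (cot ^ 2 - ‖gradient φ x‖ ^ 2)) :
    ∀ x, -((∑ i : Fin n,
        fderiv ℝ (fun y => fderiv ℝ φ y (EuclideanSpace.single i (1 : ℝ))) x
          (EuclideanSpace.single i (1 : ℝ))) / Real.sqrt (1 + ‖gradient φ x‖ ^ 2)
        - ⟪fderiv ℝ (gradient φ) x (gradient φ x), gradient φ x⟫
            / (1 + ‖gradient φ x‖ ^ 2) ^ ((3 : ℝ) / 2))
      + c₀ - c / Real.sqrt (1 + ‖gradient φ x‖ ^ 2) ≤ 0 := by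
  intro x
  have hφ₁ : Differentiable ℝ φ := hφ.differentiable (by norm_num)
  have hφ₂ : Differentiable ℝ (fderiv ℝ φ) :=
    (hφ.fderiv_right (m := 1) (by norm_num)).differentiable (by norm_num)
  have hcot_sq : cot ^ 2 = (c / c₀) ^ 2 - 1 := by
    rw [hcot, Real.sq_sqrt (sub_nonneg.2 (one_le_pow₀ ((one_le_div hc₀).2 hc.le)))]
  have hhess : ⟪fderiv ℝ (gradient φ) x (gradient φ x), gradient φ x⟫
      / (1 + ‖gradient φ x‖ ^ 2) ^ ((3 : ℝ) / 2) ≤ 0 := by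
    rw [inner_fderiv_gradient_apply (hφ₂ x)]
    exact div_nonpos_of_nonpos_of_nonneg
      (hconc.fderiv_fderiv_apply_self_nonpos hφ₁ (hφ₂ x) _) (by positivity)
  have hforce := forcing_sub_div_sqrt_one_add_sq_nonpos (g := ‖gradient φ x‖) hc₀.ne'
    (hc₀.trans hc)
  rw [hcot_sq] at hpde
  rw [neg_eq_iff_eq_neg.mp (hpde x), neg_div]
  linarith

/-- If `φ` is a `C²` concave solution of `-Δφ = (c₀ sin α / 2)(cot²α - |Dφ|²)` with
`|Dφ| ≤ cot α` (where `sin α = c₀/c`, `cot α = √((c/c₀)² - 1)`), then `φ` is a classical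
subsolution of the forced mean curvature equation
`-div(Dφ/√(1+|Dφ|²)) + c₀ - c/√(1+|Dφ|²) ≤ 0`, the divergence being expanded as
`Δφ/√(1+|Dφ|²) - D²φ(Dφ,Dφ)/(1+|Dφ|²)^{3/2}`. -/
theorem stmt_7 {n : ℕ} (hn : 1 ≤ n) (c c₀ cot : ℝ) (hc₀ : 0 < c₀) (hc : c₀ < c)
    (hcot : cot = Real.sqrt ((c / c₀) ^ 2 - 1))
    (φ : EuclideanSpace ℝ (Fin n) → ℝ)
    (hφ : ContDiff ℝ 2 φ)
    (hconc : ConcaveOn ℝ Set.univ φ)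
    (hpde : ∀ x, -(∑ i : Fin n,
        fderiv ℝ (fun y => fderiv ℝ φ y (EuclideanSpace.single i (1 : ℝ))) x
          (EuclideanSpace.single i (1 : ℝ)))
      = (c₀ * (c₀ / c) / 2) * (cot ^ 2 - ‖gradient φ x‖ ^ 2))
    (hgrad : ∀ x, ‖gradient φ x‖ ≤ cot) :
    ∀ x, -((∑ i : Fin n,
        fderiv ℝ (fun y => fderiv ℝ φ y (EuclideanSpace.single i (1 : ℝ))) x
          (EuclideanSpace.single i (1 : ℝ))) / Real.sqrt (1 + ‖gradient φ x‖ ^ 2)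
        - ⟪fderiv ℝ (gradient φ) x (gradient φ x), gradient φ x⟫
            / (1 + ‖gradient φ x‖ ^ 2) ^ ((3 : ℝ) / 2))
      + c₀ - c / Real.sqrt (1 + ‖gradient φ x‖ ^ 2) ≤ 0 :=
  stmt_7_general c c₀ cot hc₀ hc hcot φ hφ hconc hpde
end

section
/- In the finite-facet setting, with φ*(x) = min_i ( -(b/a)⟨x,ν_i⟩ - (1/a) ln λ_i ) and φ_*(x) = -(1/a) ln( Σ_i λ_i e^{b⟨x,ν_i⟩} ), one has for every x in the cell of index i₀: 0 ≤ φ*(x) - φ_*(x) ≤ (1/a) ln( 1 + Σ_{j≠i₀} (λ_j/λ_{i₀}) e^{-b δ dist(x,E)} ). In particular sup_{dist(x,E) ≥ l} |φ*(x) - φ_*(x)| → 0 as l → ∞. -/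
open scoped RealInnerProductSpace
open Finset Filter Metric Real Set Topology

/-!
For `i₀` with `⟪x, ν i₀⟫` maximal, `φ* ≤ -(1/a)(b⟪x, ν i₀⟫ + ln λ_{i₀})`, so `φ* - φ_*` is at most
`(1/a) ln (1 + Σ_{j≠i₀} (λ_j/λ_{i₀}) e^{b(⟪x, ν j⟫ - ⟪x, ν i₀⟫)})`, while `φ_* ≤ φ*` because the
log-sum-exp dominates each of its terms. The exponents are controlled by the distance to `E`:
walking from `x` in the direction `-(ν i₀ - ν j)`, the gap between `⟪·, ν i₀⟫` and the largest
other `⟪·, ν l⟫` changes sign after a distance `⟪x, ν i₀ - ν j⟫ / ‖ν i₀ - ν j‖`, and by the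
intermediate value theorem it vanishes somewhere in between, at a point of `E = tieSet ν`. Hence
`δ · dist(x, E) ≤ ⟪x, ν i₀⟫ - ⟪x, ν j⟫`.
-/

section TieSet

variable {F ι : Type*} [NormedAddCommGroup F] [InnerProductSpace ℝ F]

def tieSet (ν : ι → F) : Set F :=
  {x | ∃ i j, i ≠ j ∧ (∀ l, ⟪x, ν l⟫ ≤ ⟪x, ν i⟫) ∧ ⟪x, ν j⟫ = ⟪x, ν i⟫}

variable [Fintype ι] [DecidableEq ι]

theorem exists_mem_tieSet_of_continuous (ν : ι → F) {γ : ℝ → F} (hγ : Continuous γ) {T : ℝ}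
    (hT : 0 ≤ T) {i₀ j : ι} (hj : j ≠ i₀) (h₀ : ∀ i, ⟪γ 0, ν i⟫ ≤ ⟪γ 0, ν i₀⟫)
    (hT' : ⟪γ T, ν i₀⟫ ≤ ⟪γ T, ν j⟫) :
    ∃ t ∈ Icc 0 T, γ t ∈ tieSet ν := by
  have hne : (univ.erase i₀).Nonempty := ⟨j, mem_erase.2 ⟨hj, mem_univ j⟩⟩
  set g : ℝ → ℝ := fun t ↦ ⟪γ t, ν i₀⟫ - (univ.erase i₀).sup' hne fun l ↦ ⟪γ t, ν l⟫
  have hg : Continuous g := by fun_prop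
  have hgT : g T ≤ 0 :=
    sub_nonpos.2 (hT'.trans (le_sup' (fun l ↦ ⟪γ T, ν l⟫) (mem_erase.2 ⟨hj, mem_univ j⟩)))
  have hg₀ : 0 ≤ g 0 := sub_nonneg.2 (sup'_le _ _ fun l _ ↦ h₀ l)
  obtain ⟨t, ht, hgt⟩ := intermediate_value_Icc' hT hg.continuousOn ⟨hgT, hg₀⟩
  have htie : ⟪γ t, ν i₀⟫ = (univ.erase i₀).sup' hne fun l ↦ ⟪γ t, ν l⟫ := sub_eq_zero.1 hgt
  obtain ⟨l, hl, hsup⟩ := exists_mem_eq_sup' hne fun l ↦ ⟪γ t, ν l⟫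
  refine ⟨t, ht, i₀, l, (ne_of_mem_erase hl).symm, fun m ↦ ?_, (htie.trans hsup).symm⟩
  rcases eq_or_ne m i₀ with rfl | hm
  · exact le_rfl
  · exact htie ▸ le_sup' (fun l ↦ ⟪γ t, ν l⟫) (mem_erase.2 ⟨hm, mem_univ m⟩)

theorem norm_sub_mul_infDist_tieSet_le (ν : ι → F) {x : F} {i₀ j : ι}
    (hmax : ∀ i, ⟪x, ν i⟫ ≤ ⟪x, ν i₀⟫) (hj : j ≠ i₀) :
    ‖ν i₀ - ν j‖ * infDist x (tieSet ν) ≤ ⟪x, ν i₀⟫ - ⟪x, ν j⟫ := by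
  set w := ν i₀ - ν j
  rw [← inner_sub_right]
  set T := ⟪x, w⟫ / ‖w‖ ^ 2
  have hT : 0 ≤ T := div_nonneg (by rw [inner_sub_right]; linarith [hmax j]) (by positivity)
  have hTw : T * ‖w‖ ^ 2 = ⟪x, w⟫ :=
    div_mul_cancel_of_imp fun h ↦ by simp [norm_eq_zero.1 (pow_eq_zero_iff two_ne_zero |>.1 h)]
  have hcross : ⟪x - T • w, ν i₀⟫ ≤ ⟪x - T • w, ν j⟫ := by
    have : ⟪x - T • w, w⟫ = 0 := by
      rw [inner_sub_left, real_inner_smul_left, real_inner_self_eq_norm_sq, hTw, sub_self]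
    rw [inner_sub_right] at this
    linarith
  obtain ⟨t, ⟨ht₀, htT⟩, hmem⟩ := exists_mem_tieSet_of_continuous ν (γ := fun t ↦ x - t • w)
    (by fun_prop) hT hj (by simpa using hmax) hcross
  calc ‖w‖ * infDist x (tieSet ν) ≤ ‖w‖ * (t * ‖w‖) := by
        gcongr
        refine (infDist_le_dist_of_mem hmem).trans_eq ?_
        simp [norm_smul, abs_of_nonneg ht₀]
    _ = t * ‖w‖ ^ 2 := by ring
    _ ≤ T * ‖w‖ ^ 2 := by gcongr
    _ = ⟪x, w⟫ := hTw

end TieSet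

section LogSumExp

variable {ι : Type*} [Fintype ι] {lam : ι → ℝ}

theorem log_add_le_log_sum_mul_exp (hlam : ∀ i, 0 < lam i) (s : ι → ℝ) (i : ι) :
    log (lam i) + s i ≤ log (∑ j, lam j * exp (s j)) := by
  rw [← log_exp (s i), ← log_mul (hlam i).ne' (exp_pos _).ne']
  exact log_le_log (mul_pos (hlam i) (exp_pos _)) <|
    single_le_sum (fun j _ ↦ (mul_pos (hlam j) (exp_pos _)).le) (mem_univ i)

theorem log_sum_mul_exp_le [DecidableEq ι] (hlam : ∀ i, 0 < lam i) {s : ι → ℝ} {i₀ : ι} {r : ℝ}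
    (hr : ∀ j ≠ i₀, s j ≤ s i₀ - r) :
    log (∑ j, lam j * exp (s j)) ≤
      log (lam i₀) + s i₀ + log (1 + ∑ j ∈ univ.erase i₀, lam j / lam i₀ * exp (-r)) := by
  set P := lam i₀ * exp (s i₀) with hPdef
  have hP : 0 < P := mul_pos (hlam i₀) (exp_pos _)
  have hterm : ∀ j ∈ univ.erase i₀, lam j * exp (s j) ≤ P * (lam j / lam i₀ * exp (-r)) := by
    intro j hj
    calc lam j * exp (s j) ≤ lam j * exp (s i₀ - r) :=
          mul_le_mul_of_nonneg_left (exp_le_exp.2 (hr j (ne_of_mem_erase hj))) (hlam j).le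
      _ = P * (lam j / lam i₀ * exp (-r)) := by
          rw [sub_eq_add_neg, exp_add, hPdef]
          field_simp [(hlam i₀).ne']
  have hsum : ∑ j, lam j * exp (s j) ≤ P * (1 + ∑ j ∈ univ.erase i₀, lam j / lam i₀ * exp (-r)) :=
    calc ∑ j, lam j * exp (s j) = P + ∑ j ∈ univ.erase i₀, lam j * exp (s j) :=
          (add_sum_erase _ _ (mem_univ i₀)).symm
      _ ≤ P + ∑ j ∈ univ.erase i₀, P * (lam j / lam i₀ * exp (-r)) :=
          add_le_add_right (sum_le_sum hterm) P
      _ = P * (1 + ∑ j ∈ univ.erase i₀, lam j / lam i₀ * exp (-r)) := by rw [← mul_sum]; ring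
  have hR : 0 ≤ ∑ j ∈ univ.erase i₀, lam j / lam i₀ * exp (-r) :=
    sum_nonneg fun j _ ↦ mul_nonneg (div_nonneg (hlam j).le (hlam i₀).le) (exp_pos _).le
  calc log (∑ j, lam j * exp (s j))
      ≤ log (P * (1 + ∑ j ∈ univ.erase i₀, lam j / lam i₀ * exp (-r))) :=
        log_le_log (sum_pos (fun j _ ↦ mul_pos (hlam j) (exp_pos _)) ⟨i₀, mem_univ _⟩) hsum
    _ = _ := by
        rw [log_mul hP.ne' (by positivity), log_mul (hlam i₀).ne' (exp_pos _).ne', log_exp]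

variable {a : ℝ} (b : ℝ)

theorem neg_log_sum_mul_exp_le_iInf [Nonempty ι] (ha : 0 < a) (hlam : ∀ i, 0 < lam i)
    (u : ι → ℝ) :
    -(1 / a) * log (∑ i, lam i * exp (b * u i)) ≤ ⨅ i, (-(b / a) * u i - (1 / a) * log (lam i)) :=
  le_ciInf fun i ↦ by
    have := log_add_le_log_sum_mul_exp hlam (fun i ↦ b * u i) i
    have h := mul_le_mul_of_nonneg_left this (one_div_pos.2 ha).le
    calc -(1 / a) * log (∑ i, lam i * exp (b * u i)) ≤ -(1 / a) * (log (lam i) + b * u i) := by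
          linarith
      _ = -(b / a) * u i - (1 / a) * log (lam i) := by ring

theorem iInf_sub_neg_log_sum_mul_exp_le [DecidableEq ι] (ha : 0 < a) (hlam : ∀ i, 0 < lam i)
    {u : ι → ℝ} {i₀ : ι} {r : ℝ} (hr : ∀ j ≠ i₀, b * u j ≤ b * u i₀ - r) :
    (⨅ i, (-(b / a) * u i - (1 / a) * log (lam i))) - -(1 / a) * log (∑ i, lam i * exp (b * u i))
      ≤ (1 / a) * log (1 + ∑ j ∈ univ.erase i₀, lam j / lam i₀ * exp (-r)) := by
  have hinf := ciInf_le (Set.finite_range fun i ↦ -(b / a) * u i - (1 / a) * log (lam i)).bddBelow i₀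
  have hlog := mul_le_mul_of_nonneg_left (log_sum_mul_exp_le hlam (s := fun i ↦ b * u i) hr)
    (one_div_pos.2 ha).le
  linarith [show (1 / a) * (log (lam i₀) + b * u i₀) = (b / a) * u i₀ + (1 / a) * log (lam i₀) by
    ring]

end LogSumExp

theorem tendsto_log_one_add_sum_mul_exp_neg {ι : Type*} (S : Finset ι) (c : ι → ℝ) {r : ℝ}
    (hr : 0 < r) : Tendsto (fun t ↦ log (1 + ∑ j ∈ S, c j * exp (-(r * t)))) atTop (𝓝 0) := by
  have hexp : Tendsto (fun t ↦ exp (-(r * t))) atTop (𝓝 0) :=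
    tendsto_exp_atBot.comp (tendsto_neg_atTop_atBot.comp (tendsto_id.const_mul_atTop hr))
  have hsum : Tendsto (fun t ↦ 1 + ∑ j ∈ S, c j * exp (-(r * t))) atTop (𝓝 1) := by
    simpa using (tendsto_finsetSum S fun j _ ↦ hexp.const_mul (c j)).const_add 1
  have hlog : Tendsto log (𝓝 1) (𝓝 0) := by simpa using (continuousAt_log one_ne_zero).tendsto
  exact hlog.comp hsum

theorem stmt_11_general {n : ℕ} (k : ℕ) (hk : 2 ≤ k) (a b : ℝ) (ha : 0 < a) (hb : 0 < b)
    (ν : Fin k → EuclideanSpace ℝ (Fin n))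
    (lam : Fin k → ℝ) (hlam : ∀ i, 0 < lam i)
    (δ : ℝ) (hδ : 0 < δ) (hδle : ∀ i j, i ≠ j → δ ≤ ‖ν i - ν j‖)
    (E : Set (EuclideanSpace ℝ (Fin n)))
    (hE : E = { x | ∃ i j, i ≠ j ∧ (∀ l, ⟪x, ν l⟫ ≤ ⟪x, ν i⟫) ∧ ⟪x, ν j⟫ = ⟪x, ν i⟫ })
    (φsup φsub : EuclideanSpace ℝ (Fin n) → ℝ)
    (hφsup : ∀ x, φsup x = ⨅ i : Fin k, (-(b / a) * ⟪x, ν i⟫ - (1 / a) * Real.log (lam i)))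
    (hφsub : ∀ x, φsub x =
      -(1 / a) * Real.log (∑ i : Fin k, lam i * Real.exp (b * ⟪x, ν i⟫))) :
    (∀ x (i₀ : Fin k), (∀ i, ⟪x, ν i⟫ ≤ ⟪x, ν i₀⟫) →
      0 ≤ φsup x - φsub x ∧
      φsup x - φsub x ≤ (1 / a) * Real.log (1 + ∑ j ∈ Finset.univ.erase i₀,
        (lam j / lam i₀) * Real.exp (-(b * δ * Metric.infDist x E)))) ∧
    (∀ ε > 0, ∃ l : ℝ, ∀ x, l ≤ Metric.infDist x E → |φsup x - φsub x| ≤ ε) := by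
  have : Nonempty (Fin k) := ⟨⟨0, by omega⟩⟩
  have hcell : ∀ x (i₀ : Fin k), (∀ i, ⟪x, ν i⟫ ≤ ⟪x, ν i₀⟫) → 0 ≤ φsup x - φsub x ∧
      φsup x - φsub x ≤ (1 / a) * log (1 + ∑ j ∈ univ.erase i₀,
        (lam j / lam i₀) * exp (-(b * δ * infDist x E))) := by
    intro x i₀ hmax
    rw [hφsup, hφsub]
    refine ⟨sub_nonneg.2 (neg_log_sum_mul_exp_le_iInf b ha hlam _),
      iInf_sub_neg_log_sum_mul_exp_le b ha hlam fun j hj ↦ ?_⟩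
    have hgap := norm_sub_mul_infDist_tieSet_le ν hmax hj
    have hδD : δ * infDist x E ≤ ⟪x, ν i₀⟫ - ⟪x, ν j⟫ := hE ▸
      (mul_le_mul_of_nonneg_right (hδle i₀ j hj.symm) infDist_nonneg).trans hgap
    nlinarith
  refine ⟨hcell, fun ε hε ↦ ?_⟩
  have hlim : ∀ i₀ : Fin k, ∀ᶠ t in atTop, (1 / a) * log (1 + ∑ j ∈ univ.erase i₀,
      (lam j / lam i₀) * exp (-(b * δ * t))) ≤ ε := fun i₀ ↦
    ((tendsto_log_one_add_sum_mul_exp_neg _ _ (mul_pos hb hδ)).const_mul (1 / a)).eventually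
      (ge_mem_nhds (by simpa using hε))
  obtain ⟨l, hl⟩ := eventually_atTop.1 (eventually_all.2 hlim)
  refine ⟨l, fun x hx ↦ ?_⟩
  obtain ⟨i₀, hi₀⟩ := Finite.exists_max fun i ↦ ⟪x, ν i⟫
  obtain ⟨h₀, hle⟩ := hcell x i₀ hi₀
  rw [abs_of_nonneg h₀]
  exact hle.trans (hl _ hx i₀)

/-- In the finite-facet setting, on the cell where `⟪x,ν_{i₀}⟫` is maximal one has
`0 ≤ φ* - φ_* ≤ (1/a) ln(1 + Σ_{j≠i₀} (λ_j/λ_{i₀}) e^{-bδ dist(x,E)})`; in particular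
`sup_{dist(x,E) ≥ l} |φ* - φ_*| → 0` as `l → ∞`. -/
theorem stmt_11 {n : ℕ} (k : ℕ) (hk : 2 ≤ k) (a b : ℝ) (ha : 0 < a) (hb : 0 < b)
    (ν : Fin k → EuclideanSpace ℝ (Fin n)) (hν : ∀ i, ‖ν i‖ = 1)
    (hinj : Function.Injective ν)
    (lam : Fin k → ℝ) (hlam : ∀ i, 0 < lam i)
    (δ : ℝ) (hδ : 0 < δ) (hδle : ∀ i j, i ≠ j → δ ≤ ‖ν i - ν j‖)
    (E : Set (EuclideanSpace ℝ (Fin n)))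
    (hE : E = { x | ∃ i j, i ≠ j ∧ (∀ l, ⟪x, ν l⟫ ≤ ⟪x, ν i⟫) ∧ ⟪x, ν j⟫ = ⟪x, ν i⟫ })
    (φsup φsub : EuclideanSpace ℝ (Fin n) → ℝ)
    (hφsup : ∀ x, φsup x = ⨅ i : Fin k, (-(b / a) * ⟪x, ν i⟫ - (1 / a) * Real.log (lam i)))
    (hφsub : ∀ x, φsub x =
      -(1 / a) * Real.log (∑ i : Fin k, lam i * Real.exp (b * ⟪x, ν i⟫))) :
    (∀ x (i₀ : Fin k), (∀ i, ⟪x, ν i⟫ ≤ ⟪x, ν i₀⟫) →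
      0 ≤ φsup x - φsub x ∧
      φsup x - φsub x ≤ (1 / a) * Real.log (1 + ∑ j ∈ Finset.univ.erase i₀,
        (lam j / lam i₀) * Real.exp (-(b * δ * Metric.infDist x E)))) ∧
    (∀ ε > 0, ∃ l : ℝ, ∀ x, l ≤ Metric.infDist x E → |φsup x - φsub x| ≤ ε) :=
  stmt_11_general k hk a b ha hb ν lam hlam δ hδ hδle E hE φsup φsub hφsup hφsub
end

section
/- Let v : (0,∞) → ℝ solve v' = (1+v²)(c₀√(1+v²) - c - v/r) with -cot α ≤ v(r) ≤ 0 for all r > 0 and v decreasing, where c > c₀ > 0 and cot α = √((c/c₀)²-1). Then v(r) → -cot α as r → ∞. -/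
/-! The solution is monotone and bounded, so it has a limit `l ≤ 0`; since `v r / r → 0`, the
right-hand side of the equation then tends to `(1 + l²)(c₀√(1 + l²) - c)`. A function with a
finite limit cannot have a derivative tending to a nonzero limit, so `c₀√(1 + l²) = c`, which
together with `l ≤ 0` forces `l = -√((c/c₀)² - 1)`. -/

open Filter Set Topology

theorem AntitoneOn.exists_tendsto_atTop {f : ℝ → ℝ} {a m : ℝ} (hf : AntitoneOn f (Ioi a))
    (hm : ∀ x, a < x → m ≤ f x) : ∃ l, Tendsto f atTop (𝓝 l) := by
  have hmem : ∀ x, max x (a + 1) ∈ Ioi a := fun x =>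
    lt_of_lt_of_le (lt_add_one a) (le_max_right x _)
  have hanti : Antitone fun x => f (max x (a + 1)) := fun x y hxy =>
    hf (hmem x) (hmem y) (max_le_max hxy le_rfl)
  refine ⟨_, (tendsto_atTop_ciInf hanti ⟨m, ?_⟩).congr' ?_⟩
  · rintro _ ⟨x, rfl⟩
    exact hm _ (hmem x)
  · filter_upwards [eventually_ge_atTop (a + 1)] with x hx
    rw [max_eq_left hx]

theorem tendsto_atBot_of_hasDerivAt_le_neg {f f' : ℝ → ℝ} {a ε : ℝ} (hε : 0 < ε)
    (hf : ∀ x, a ≤ x → HasDerivAt f (f' x) x) (hf' : ∀ x, a ≤ x → f' x ≤ -ε) :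
    Tendsto f atTop atBot := by
  have hbound : ∀ x, a ≤ x → f x ≤ f a + -ε * (x - a) := by
    intro x hx
    have := (convex_Ici a).image_sub_le_mul_sub_of_deriv_le
      (fun y hy => (hf y hy).continuousAt.continuousWithinAt)
      (fun y hy => (hf y (interior_subset hy)).differentiableAt.differentiableWithinAt)
      (fun y hy => (hf y (interior_subset hy)).deriv ▸ hf' y (interior_subset hy))
      a self_mem_Ici x hx hx
    linarith
  refine tendsto_atBot_mono' _ (eventually_atTop.2 ⟨a, hbound⟩) ?_
  exact tendsto_atBot_add_const_left _ _
    ((tendsto_atTop_add_const_right _ _ tendsto_id).const_mul_atTop_of_neg (neg_neg_of_pos hε))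

theorem eq_zero_of_tendsto_of_hasDerivAt_tendsto {f f' : ℝ → ℝ} {l d : ℝ}
    (hf : Tendsto f atTop (𝓝 l)) (hderiv : ∀ᶠ x in atTop, HasDerivAt f (f' x) x)
    (hf' : Tendsto f' atTop (𝓝 d)) : d = 0 := by
  have not_neg : ∀ {g g' : ℝ → ℝ} {m e : ℝ}, Tendsto g atTop (𝓝 m) →
      (∀ᶠ x in atTop, HasDerivAt g (g' x) x) → Tendsto g' atTop (𝓝 e) → ¬e < 0 := by
    intro g g' m e hg hgderiv hg' he
    obtain ⟨a, ha⟩ := eventually_atTop.1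
      (hgderiv.and (hg'.eventually (gt_mem_nhds (by linarith : e < e / 2))))
    exact not_tendsto_nhds_of_tendsto_atBot (tendsto_atBot_of_hasDerivAt_le_neg
      (by linarith : 0 < -(e / 2)) (fun x hx => (ha x hx).1)
      (fun x hx => by linarith [(ha x hx).2])) m hg
  have h₁ := not_neg hf hderiv hf'
  have h₂ := not_neg hf.neg (hderiv.mono fun x hx => hx.neg) hf'.neg
  linarith

theorem eq_neg_sqrt_of_mul_sqrt_one_add_sq_eq {c c₀ l : ℝ} (hc₀ : 0 < c₀) (hl : l ≤ 0)
    (h : c₀ * √(1 + l ^ 2) = c) : l = -√((c / c₀) ^ 2 - 1) := by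
  have hsqrt : √(1 + l ^ 2) = c / c₀ := by
    rw [eq_div_iff hc₀.ne', mul_comm, h]
  have hsq : (c / c₀) ^ 2 - 1 = l ^ 2 := by
    rw [← hsqrt, Real.sq_sqrt (by positivity)]
    ring
  rw [hsq, Real.sqrt_sq_eq_abs, abs_of_nonpos hl, neg_neg]

theorem stmt_14_general (c c₀ cot : ℝ) (hc₀ : 0 < c₀)
    (hcot : cot = Real.sqrt ((c / c₀) ^ 2 - 1))
    (v : ℝ → ℝ)
    (hode : ∀ r, 0 < r → HasDerivAt v
      ((1 + v r ^ 2) * (c₀ * Real.sqrt (1 + v r ^ 2) - c - v r / r)) r)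
    (hbound : ∀ r, 0 < r → -cot ≤ v r ∧ v r ≤ 0)
    (hanti : AntitoneOn v (Set.Ioi 0)) :
    Filter.Tendsto v Filter.atTop (nhds (-cot)) := by
  obtain ⟨l, hl⟩ := hanti.exists_tendsto_atTop fun r hr => (hbound r hr).1
  have hl_nonpos : l ≤ 0 :=
    le_of_tendsto hl ((eventually_gt_atTop 0).mono fun r hr => (hbound r hr).2)
  have hrhs : Tendsto (fun r => (1 + v r ^ 2) * (c₀ * √(1 + v r ^ 2) - c - v r / r)) atTop
      (𝓝 ((1 + l ^ 2) * (c₀ * √(1 + l ^ 2) - c - 0))) := by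
    have hsq := (hl.pow 2).const_add 1
    exact hsq.mul ((hsq.sqrt.const_mul c₀).sub_const c |>.sub (hl.div_atTop tendsto_id))
  have hzero := eq_zero_of_tendsto_of_hasDerivAt_tendsto hl
    ((eventually_gt_atTop 0).mono hode) hrhs
  have hlim : c₀ * √(1 + l ^ 2) = c := by
    rcases mul_eq_zero.1 hzero with h | h
    · nlinarith [sq_nonneg l]
    · linarith
  rwa [hcot, ← eq_neg_sqrt_of_mul_sqrt_one_add_sq_eq hc₀ hl_nonpos hlim]

/-- If `v` solves `v' = (1+v²)(c₀√(1+v²) - c - v/r)` on `(0,∞)`, is decreasing and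
satisfies `-cot α ≤ v ≤ 0`, then `v(r) → -cot α` as `r → ∞`. -/
theorem stmt_14 (c c₀ cot : ℝ) (hc₀ : 0 < c₀) (hc : c₀ < c)
    (hcot : cot = Real.sqrt ((c / c₀) ^ 2 - 1))
    (v : ℝ → ℝ)
    (hode : ∀ r, 0 < r → HasDerivAt v
      ((1 + v r ^ 2) * (c₀ * Real.sqrt (1 + v r ^ 2) - c - v r / r)) r)
    (hbound : ∀ r, 0 < r → -cot ≤ v r ∧ v r ≤ 0)
    (hanti : AntitoneOn v (Set.Ioi 0)) :
    Filter.Tendsto v Filter.atTop (nhds (-cot)) :=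
  stmt_14_general c c₀ cot hc₀ hcot v hode hbound hanti
end
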